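/- arXiv:2402.01632 — 3 statements merged into one kernel-verified Lean document; each statement's English description precedes it below -/
import Mathlib

section
/- Let K be a symmetric positive semidefinite T×T real matrix with diagonal entries K_{ii} ≤ 1, let R > 0 and define the posterior variance recursion: with A ⊆ {1,...,T} an index set, σ_A²(x) = K_{xx} − k_A(x)ᵀ(K_A + R²I)^{−1}k_A(x), where K_A is the submatrix of K indexed by A and k_A(x) the vector (K_{x,a})_{a∈A}. Then for any sequence of indices x_1, ..., x_n added one at a time with A_t = {x_1,...,x_{t−1}}, we have ∑_{t=1}^n log(1 + R^{−2}·σ_{A_t}²(x_t)) = log det(I + R^{−2}·K_{A_{n+1}}). -/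
open Matrix Real Finset

/-!
Appending the query point `x t` borders the regularized Gram matrix `1 + R⁻² K_t` by one row and
column. Since `1 + R⁻² K_t = R⁻² (K_t + R² 1)`, the Schur complement of the old block is exactly
`1 + R⁻² σ_t²`, so each step multiplies the determinant by this factor. Positive semidefiniteness
of `K` keeps every determinant positive, and taking logarithms telescopes.
-/

namespace Matrix

theorem det_succ_eq_det_castSucc_mul_schur {α : Type*} [CommRing α] {n : ℕ}
    (M : Matrix (Fin (n + 1)) (Fin (n + 1)) α)
    (hM : IsUnit (M.submatrix Fin.castSucc Fin.castSucc).det) :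
    M.det = (M.submatrix Fin.castSucc Fin.castSucc).det *
      (M (Fin.last n) (Fin.last n) - (fun j => M (Fin.last n) j.castSucc) ⬝ᵥ
        ((M.submatrix Fin.castSucc Fin.castSucc)⁻¹ *ᵥ
          fun i => M i.castSucc (Fin.last n))) := by
  let := (M.submatrix Fin.castSucc Fin.castSucc).invertibleOfIsUnitDet hM
  have hblocks : M.submatrix finSumFinEquiv finSumFinEquiv =
      fromBlocks (M.submatrix Fin.castSucc Fin.castSucc)
        (of fun i (_ : Fin 1) => M i.castSucc (Fin.last n))
        (of fun _ j => M (Fin.last n) j.castSucc)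
        (of fun _ _ => M (Fin.last n) (Fin.last n)) := by
    ext (i | i) (j | j) <;> simp [Fin.fin_one_eq_zero] <;> rfl
  rw [← det_submatrix_equiv_self finSumFinEquiv, hblocks, det_fromBlocks₁₁, det_fin_one,
    invOf_eq_nonsing_inv, Matrix.mul_assoc]
  simp [mul_apply, dotProduct, mulVec]

theorem det_one_add_inv_smul_succ {𝕜 : Type*} [Field 𝕜] {n : ℕ}
    (G : Matrix (Fin (n + 1)) (Fin (n + 1)) 𝕜) (hG : G.IsSymm) {r : 𝕜} (hr : r ≠ 0)
    (hX : IsUnit (G.submatrix Fin.castSucc Fin.castSucc + r • 1).det) :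
    (1 + r⁻¹ • G).det = (1 + r⁻¹ • G.submatrix Fin.castSucc Fin.castSucc).det *
      (1 + r⁻¹ * (G (Fin.last n) (Fin.last n) - (fun j => G (Fin.last n) j.castSucc) ⬝ᵥ
        ((G.submatrix Fin.castSucc Fin.castSucc + r • 1)⁻¹ *ᵥ
          fun j => G (Fin.last n) j.castSucc))) := by
  set X := G.submatrix Fin.castSucc Fin.castSucc + r • 1
  set k : Fin n → 𝕜 := fun j => G (Fin.last n) j.castSucc
  have htop : (1 + r⁻¹ • G).submatrix Fin.castSucc Fin.castSucc =
      1 + r⁻¹ • G.submatrix Fin.castSucc Fin.castSucc := by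
    ext i j
    simp [one_apply]
  have hscale : 1 + r⁻¹ • G.submatrix Fin.castSucc Fin.castSucc = r⁻¹ • X := by
    rw [smul_add, smul_smul, inv_mul_cancel₀ hr, one_smul, add_comm]
  have htop_unit : IsUnit ((1 + r⁻¹ • G).submatrix Fin.castSucc Fin.castSucc).det := by
    rw [htop, hscale, det_smul]
    exact (isUnit_iff_ne_zero.2 (pow_ne_zero _ (inv_ne_zero hr))).mul hX
  rw [det_succ_eq_det_castSucc_mul_schur _ htop_unit, htop]
  congr 1
  have hlast : (1 + r⁻¹ • G) (Fin.last n) (Fin.last n) =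
      1 + r⁻¹ * G (Fin.last n) (Fin.last n) := by
    simp
  have hrow : (fun j => (1 + r⁻¹ • G) (Fin.last n) j.castSucc) = r⁻¹ • k := by
    ext j
    simp [k, (Fin.castSucc_lt_last j).ne']
  have hcol : (fun i => (1 + r⁻¹ • G) i.castSucc (Fin.last n)) = r⁻¹ • k := by
    ext i
    simp [k, (Fin.castSucc_lt_last i).ne, hG.apply]
  have hinv : (r⁻¹ • X)⁻¹ = r • X⁻¹ := by
    let := invertibleOfNonzero (inv_ne_zero hr)
    rw [inv_smul X r⁻¹ hX, invOf_eq_inv, inv_inv]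
  rw [hlast, hrow, hcol, hscale, hinv]
  simp only [smul_mulVec, mulVec_smul, smul_dotProduct, dotProduct_smul, smul_eq_mul]
  field_simp
  ring

end Matrix

theorem information_gain_telescoping_general
    (T : ℕ) (K : Matrix (Fin T) (Fin T) ℝ) (hK : K.PosSemidef)
    (R : ℝ) (hR : 0 < R)
    (x : ℕ → Fin T) (n : ℕ)
    (Kmat : ∀ t : ℕ, Matrix (Fin t) (Fin t) ℝ)
    (hKmat : ∀ t, Kmat t = Matrix.of fun i j : Fin t => K (x i) (x j))
    (kvec : ∀ t : ℕ, Fin t → ℝ)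
    (hkvec : ∀ t, kvec t = fun i : Fin t => K (x t) (x i))
    (σsq : ℕ → ℝ)
    (hσsq : ∀ t, σsq t = K (x t) (x t) -
      kvec t ⬝ᵥ ((Kmat t + R ^ 2 • (1 : Matrix (Fin t) (Fin t) ℝ))⁻¹ *ᵥ kvec t)) :
    ∑ t ∈ Finset.range n, Real.log (1 + R⁻¹ ^ 2 * σsq t)
      = Real.log ((1 + R⁻¹ ^ 2 • Kmat n).det) := by
  have hgram : ∀ t, Kmat t = K.submatrix (fun i : Fin t => x i) (fun i : Fin t => x i) := hKmat
  have hgram_psd : ∀ t, (Kmat t).PosSemidef := fun t => hgram t ▸ hK.submatrix _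
  have hdet_pos : ∀ t, 0 < (1 + R⁻¹ ^ 2 • Kmat t).det := fun t =>
    (PosDef.one.add_posSemidef ((hgram_psd t).smul (by positivity))).det_pos
  induction n with
  | zero => simp
  | succ n ih =>
    have hsub : (Kmat (n + 1)).submatrix Fin.castSucc Fin.castSucc = Kmat n := by
      simp [hgram, Function.comp_def]
    have hX : IsUnit ((Kmat (n + 1)).submatrix Fin.castSucc Fin.castSucc + R ^ 2 • 1).det := by
      rw [hsub]
      have hpd := PosDef.posSemidef_add (hgram_psd n) (PosDef.one.smul (pow_pos hR 2))
      exact hpd.det_pos.ne'.isUnit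
    have hstep : (1 + R⁻¹ ^ 2 • Kmat (n + 1)).det =
        (1 + R⁻¹ ^ 2 • Kmat n).det * (1 + R⁻¹ ^ 2 * σsq n) := by
      have hsymm := isHermitian_iff_isSymm.1 (hgram_psd (n + 1)).isHermitian
      rw [inv_pow, det_one_add_inv_smul_succ _ hsymm (by positivity) hX, hsub, hσsq, hkvec]
      simp [hgram]
    have hfactor_pos : 0 < 1 + R⁻¹ ^ 2 * σsq n :=
      pos_of_mul_pos_right (hstep ▸ hdet_pos (n + 1)) (hdet_pos n).le
    rw [sum_range_succ, ih, hstep, log_mul (hdet_pos n).ne' hfactor_pos.ne']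

/-- Information-gain telescoping identity: for a symmetric PSD kernel matrix
`K` with diagonal at most 1 and a sequence of queried indices `x 0, x 1, ...`,
the sum over `t < n` of `log (1 + R⁻² σ_t²(x t))`, where `σ_t²` is the GP
posterior variance conditioned on the first `t` points, equals
`log det (I + R⁻² K_n)` with `K_n` the Gram matrix of the first `n` points. -/
theorem information_gain_telescoping
    (T : ℕ) (K : Matrix (Fin T) (Fin T) ℝ) (hK : K.PosSemidef)
    (hdiag : ∀ i, K i i ≤ 1) (R : ℝ) (hR : 0 < R)
    (x : ℕ → Fin T) (n : ℕ)
    (Kmat : ∀ t : ℕ, Matrix (Fin t) (Fin t) ℝ)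
    (hKmat : ∀ t, Kmat t = Matrix.of fun i j : Fin t => K (x i) (x j))
    (kvec : ∀ t : ℕ, Fin t → ℝ)
    (hkvec : ∀ t, kvec t = fun i : Fin t => K (x t) (x i))
    (σsq : ℕ → ℝ)
    (hσsq : ∀ t, σsq t = K (x t) (x t) -
      kvec t ⬝ᵥ ((Kmat t + R ^ 2 • (1 : Matrix (Fin t) (Fin t) ℝ))⁻¹ *ᵥ kvec t)) :
    ∑ t ∈ Finset.range n, Real.log (1 + R⁻¹ ^ 2 * σsq t)
      = Real.log ((1 + R⁻¹ ^ 2 • Kmat n).det) :=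
  information_gain_telescoping_general T K hK R hR x n Kmat hKmat kvec hkvec σsq hσsq
end

section
/- Let K be a symmetric positive semidefinite matrix indexed by a finite set, R > 0, and for an index set A define σ_A²(x) = K_{xx} − k_A(x)ᵀ(K_A + R²I)^{−1}k_A(x). If A' ⊆ A, then σ_A²(x) ≤ σ_{A'}²(x) for every index x. -/
/-!
The posterior variance is `K x x - v ⬝ᵥ M⁻¹ v` with `M = K_A + R² I` positive definite, and
`v ⬝ᵥ M⁻¹ v = max_w (2 w ⬝ᵥ v - w ⬝ᵥ M w)`, attained at `w = M⁻¹ v`. For `A' ⊆ A`, the matrix for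
`A'` is a principal submatrix of the one for `A`, and extending the optimal weight for `A'` by zero
gives a competitor for `A` with the same value, so the maximum can only grow with the index set.
-/

open Matrix

namespace Matrix

variable {m n : Type*} [Fintype m] [Fintype n] [DecidableEq m] [DecidableEq n]

theorem two_mul_dotProduct_sub_le_dotProduct_inv_mulVec {M : Matrix n n ℝ} (hM : M.PosDef)
    (v w : n → ℝ) : 2 * (w ⬝ᵥ v) - w ⬝ᵥ (M *ᵥ w) ≤ v ⬝ᵥ (M⁻¹ *ᵥ v) := by
  set p := M⁻¹ *ᵥ v
  have hMp : M *ᵥ p = v := by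
    rw [mulVec_mulVec, mul_nonsing_inv _ hM.det_pos.ne'.isUnit, one_mulVec]
  have hM_symm : ∀ a b : n → ℝ, a ⬝ᵥ (M *ᵥ b) = b ⬝ᵥ (M *ᵥ a) := fun a b => by
    rw [dotProduct_mulVec, ← mulVec_transpose, ← conjTranspose_eq_transpose_of_trivial,
      hM.isHermitian.eq, dotProduct_comm]
  have hsq : 0 ≤ (w - p) ⬝ᵥ (M *ᵥ (w - p)) := by
    simpa using hM.posSemidef.dotProduct_mulVec_nonneg (w - p)
  have hexpand : (w - p) ⬝ᵥ (M *ᵥ (w - p)) = w ⬝ᵥ (M *ᵥ w) - 2 * (w ⬝ᵥ v) + v ⬝ᵥ p := by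
    rw [mulVec_sub, dotProduct_sub, sub_dotProduct, sub_dotProduct, hM_symm p w, hMp,
      dotProduct_comm p v]
    ring
  linarith

theorem dotProduct_mul_mul_transpose_inv_mulVec_le {M : Matrix n n ℝ} (hM : M.PosDef)
    (S : Matrix m n ℝ) (v : n → ℝ) :
    (S *ᵥ v) ⬝ᵥ ((S * M * Sᵀ)⁻¹ *ᵥ (S *ᵥ v)) ≤ v ⬝ᵥ (M⁻¹ *ᵥ v) := by
  set N := S * M * Sᵀ
  set u := S *ᵥ v
  by_cases hN : IsUnit N.det
  · set w := N⁻¹ *ᵥ u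
    have hNw : N *ᵥ w = u := by rw [mulVec_mulVec, mul_nonsing_inv _ hN, one_mulVec]
    have hlin : (Sᵀ *ᵥ w) ⬝ᵥ v = u ⬝ᵥ w := by
      rw [mulVec_transpose, ← dotProduct_mulVec, dotProduct_comm]
    have hquad : (Sᵀ *ᵥ w) ⬝ᵥ (M *ᵥ (Sᵀ *ᵥ w)) = u ⬝ᵥ w := by
      rw [← hNw, mulVec_transpose, ← dotProduct_mulVec, ← mulVec_transpose, mulVec_mulVec,
        mulVec_mulVec, dotProduct_comm]
    calc u ⬝ᵥ w = 2 * ((Sᵀ *ᵥ w) ⬝ᵥ v) - (Sᵀ *ᵥ w) ⬝ᵥ (M *ᵥ (Sᵀ *ᵥ w)) := by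
          rw [hlin, hquad]; ring
      _ ≤ v ⬝ᵥ (M⁻¹ *ᵥ v) := two_mul_dotProduct_sub_le_dotProduct_inv_mulVec hM v _
  -- Lean's inverse of a singular matrix is `0`, so the left side vanishes.
  · rw [nonsing_inv_apply_not_isUnit N hN, zero_mulVec, dotProduct_zero]
    simpa using hM.inv.posSemidef.dotProduct_mulVec_nonneg v

theorem dotProduct_submatrix_inv_mulVec_le {M : Matrix n n ℝ} (hM : M.PosDef) (e : m → n)
    (v : n → ℝ) :
    (v ∘ e) ⬝ᵥ ((M.submatrix e e)⁻¹ *ᵥ (v ∘ e)) ≤ v ⬝ᵥ (M⁻¹ *ᵥ v) := by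
  set S : Matrix m n ℝ := (1 : Matrix n n ℝ).submatrix e id
  have hSv : S *ᵥ v = v ∘ e := by
    ext i; simp [S, mulVec, dotProduct, one_apply]
  have hSMS : S * M * Sᵀ = M.submatrix e e := by
    ext i j; simp [S, mul_apply, one_apply]
  simpa [hSv, hSMS] using dotProduct_mul_mul_transpose_inv_mulVec_le hM S v

end Matrix

theorem posterior_variance_monotone_general
    {ι : Type*} [DecidableEq ι]
    (K : Matrix ι ι ℝ) (hK : K.PosSemidef) (R : ℝ) (hR : 0 < R)
    (A' A : Finset ι) (hsub : A' ⊆ A) (x : ι)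
    (σsq : Finset ι → ℝ)
    (hσsq : ∀ B : Finset ι, σsq B = K x x -
      (fun a : {a // a ∈ B} => K x a) ⬝ᵥ
        ((((Matrix.of fun a b : {a // a ∈ B} => K a b) +
            R ^ 2 • (1 : Matrix {a // a ∈ B} {a // a ∈ B} ℝ))⁻¹) *ᵥ
          fun a : {a // a ∈ B} => K x a)) :
    σsq A ≤ σsq A' := by
  set M : Matrix A A ℝ := (Matrix.of fun a b : A => K a b) + R ^ 2 • 1
  have hM : M.PosDef :=
    PosDef.posSemidef_add (hK.submatrix Subtype.val) (PosDef.one.smul (pow_pos hR 2))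
  let e : A' → A := fun a => ⟨a, hsub a.2⟩
  have he : Function.Injective e := fun _ _ h => Subtype.ext (congrArg Subtype.val h :)
  have hMe : M.submatrix e e = (Matrix.of fun a b : A' => K a b) + R ^ 2 • 1 := by
    ext i j
    simp only [M, submatrix_apply, Matrix.add_apply, Matrix.smul_apply, of_apply, one_apply,
      he.eq_iff]
    rfl
  have key := dotProduct_submatrix_inv_mulVec_le hM e (fun a => K x a)
  rw [hMe] at key
  rw [hσsq, hσsq]
  exact sub_le_sub_left key _

/-- Monotonicity of GP posterior variance: conditioning on more observations
can only decrease the posterior variance. Here `σ_A²(x) = K x x - k_A(x)ᵀ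
(K_A + R² I)⁻¹ k_A(x)` with `K_A` the principal submatrix of `K` indexed by
`A` and `k_A(x)` the vector `(K x a)_{a ∈ A}`; if `A' ⊆ A` then
`σ_A²(x) ≤ σ_{A'}²(x)`. -/
theorem posterior_variance_monotone
    {ι : Type*} [Fintype ι] [DecidableEq ι]
    (K : Matrix ι ι ℝ) (hK : K.PosSemidef) (R : ℝ) (hR : 0 < R)
    (A' A : Finset ι) (hsub : A' ⊆ A) (x : ι)
    (σsq : Finset ι → ℝ)
    (hσsq : ∀ B : Finset ι, σsq B = K x x -
      (fun a : {a // a ∈ B} => K x a) ⬝ᵥ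
        ((((Matrix.of fun a b : {a // a ∈ B} => K a b) +
            R ^ 2 • (1 : Matrix {a // a ∈ B} {a // a ∈ B} ℝ))⁻¹) *ᵥ
          fun a : {a // a ∈ B} => K x a)) :
    σsq A ≤ σsq A' :=
  posterior_variance_monotone_general K hK R hR A' A hsub x σsq hσsq
end

section
/- Suppose r_t ≤ β_t·σ_t − η_t + ε_t for all t ∉ C, r_t ≤ 2B for t ∈ C with |C| ≤ M, and for each p in a finite set U of size M with {S_T^p}_p a partition of {1,...,T}: −∑_{t ∈ S_T^p \ C} η_t ≤ √(ξ_T·|S_T^p|) + ∑_{t ∈ S_T^p \ C} β_t·σ_t, |∑_{t ∈ S_T^p} ε_t| ≤ √(ξ_T·|S_T^p|), and ∑_{t ∈ S_T^p \ C} ε_t ≤ √(ξ_T·|S_T^p|). Then R_T = ∑_{t=1}^T r_t ≤ 2MB + 2√(ξ_T·M·T) + 2∑_{t ∉ C} β_t·σ_t. -/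
open Finset

/-- Cumulative regret decomposition of PE-GP-UCB: under the instantaneous
regret bounds off the critical set `C` (`|C| ≤ M`), the bound `r t ≤ 2B` on
`C`, the per-prior prediction-error and noise bounds over the partition
`{S p}` of `{1,...,T}`, the cumulative regret satisfies
`∑_{t=1}^T r t ≤ 2 M B + 2 √(ξ M T) + 2 ∑_{t ∉ C} β t σ t`. -/
theorem pe_gp_ucb_cumulative_regret
    (T M : ℕ) (r β σ η ε : ℕ → ℝ) (B ξ : ℝ)
    (hB : 0 ≤ B) (hξ : 0 ≤ ξ)
    (hβ : ∀ t, 0 ≤ β t) (hσ : ∀ t, 0 ≤ σ t)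
    (C : Finset ℕ) (hCsub : C ⊆ Finset.Icc 1 T) (hCcard : C.card ≤ M)
    (S : Fin M → Finset ℕ)
    (hdisj : ∀ p q, p ≠ q → Disjoint (S p) (S q))
    (hcover : Finset.Icc 1 T = Finset.univ.biUnion S)
    (hr : ∀ t ∈ Finset.Icc 1 T \ C, r t ≤ β t * σ t - η t + ε t)
    (hrC : ∀ t ∈ C, r t ≤ 2 * B)
    (hη : ∀ p : Fin M, -∑ t ∈ S p \ C, η t ≤
      Real.sqrt (ξ * (S p).card) + ∑ t ∈ S p \ C, β t * σ t)
    (hεfull : ∀ p : Fin M, |∑ t ∈ S p, ε t| ≤ Real.sqrt (ξ * (S p).card))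
    (hε : ∀ p : Fin M, ∑ t ∈ S p \ C, ε t ≤ Real.sqrt (ξ * (S p).card)) :
    ∑ t ∈ Finset.Icc 1 T, r t ≤
      2 * M * B + 2 * Real.sqrt (ξ * M * T) +
        2 * ∑ t ∈ Finset.Icc 1 T \ C, β t * σ t := by

  classical
  set A := Finset.Icc 1 T \ C with hA
  -- split sum over C and A
  have hsplit : ∑ t ∈ Finset.Icc 1 T, r t = ∑ t ∈ A, r t + ∑ t ∈ C, r t :=
    (Finset.sum_sdiff hCsub).symm
  -- bound on C
  have hCbound : ∑ t ∈ C, r t ≤ 2 * M * B := by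
    calc ∑ t ∈ C, r t ≤ ∑ _t ∈ C, 2 * B := Finset.sum_le_sum hrC
    _ = (C.card : ℝ) * (2 * B) := by simp [mul_comm]
    _ ≤ (M : ℝ) * (2 * B) := by
        apply mul_le_mul_of_nonneg_right _ (by positivity)
        exact_mod_cast hCcard
    _ = 2 * M * B := by ring
  -- A as biUnion
  have hAbi : A = Finset.univ.biUnion (fun p => S p \ C) := by
    rw [hA, hcover]
    ext t
    simp only [Finset.mem_sdiff, Finset.mem_biUnion, Finset.mem_univ, true_and]
    tauto
  have hdisj' : ∀ p ∈ (Finset.univ : Finset (Fin M)), ∀ q ∈ Finset.univ,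
      p ≠ q → Disjoint (S p \ C) (S q \ C) := by
    intro p _ q _ hpq
    exact (hdisj p q hpq).mono (Finset.sdiff_subset) (Finset.sdiff_subset)
  have hsumA : ∀ f : ℕ → ℝ, ∑ t ∈ A, f t = ∑ p : Fin M, ∑ t ∈ S p \ C, f t := by
    intro f
    rw [hAbi, Finset.sum_biUnion hdisj']
  -- cards sum to T
  have hcard : ∑ p : Fin M, ((S p).card : ℝ) = (T : ℝ) := by
    have : ∑ p : Fin M, (S p).card = (Finset.Icc 1 T).card := by
      rw [hcover, Finset.card_biUnion (fun p _ q _ h => hdisj p q h)]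
    rw [Nat.card_Icc] at this
    simp at this
    exact_mod_cast this
  -- Cauchy-Schwarz step
  have hCS : ∑ p : Fin M, Real.sqrt (ξ * (S p).card) ≤ Real.sqrt (ξ * M * T) := by
    have h1 : ∀ p : Fin M, Real.sqrt (ξ * (S p).card)
        = Real.sqrt ξ * Real.sqrt ((S p).card) := fun p => Real.sqrt_mul hξ _
    simp only [h1, ← Finset.mul_sum]
    have h2 : (∑ p : Fin M, Real.sqrt ((S p).card)) ≤ Real.sqrt (M * T) := by
      have hnn : (0:ℝ) ≤ ∑ p : Fin M, Real.sqrt ((S p).card) :=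
        Finset.sum_nonneg fun p _ => Real.sqrt_nonneg _
      rw [show (∑ p : Fin M, Real.sqrt ((S p).card))
          = Real.sqrt ((∑ p : Fin M, Real.sqrt ((S p).card))^2) from
          (Real.sqrt_sq hnn).symm]
      apply Real.sqrt_le_sqrt
      calc (∑ p : Fin M, Real.sqrt ((S p).card)) ^ 2
          ≤ (Finset.univ : Finset (Fin M)).card * ∑ p : Fin M, Real.sqrt ((S p).card) ^ 2 :=
            sq_sum_le_card_mul_sum_sq
        _ = (M : ℝ) * T := by
            simp only [Real.sq_sqrt (Nat.cast_nonneg _)]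
            rw [hcard]; simp
    calc Real.sqrt ξ * ∑ p : Fin M, Real.sqrt ((S p).card)
        ≤ Real.sqrt ξ * Real.sqrt (M * T) :=
          mul_le_mul_of_nonneg_left h2 (Real.sqrt_nonneg _)
      _ = Real.sqrt (ξ * M * T) := by
          rw [← Real.sqrt_mul hξ, mul_assoc]
  -- bound on A
  have hAbound : ∑ t ∈ A, r t ≤
      2 * Real.sqrt (ξ * M * T) + 2 * ∑ t ∈ A, β t * σ t := by
    have h1 : ∑ t ∈ A, r t ≤ ∑ t ∈ A, (β t * σ t - η t + ε t) :=
      Finset.sum_le_sum hr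
    have h2 : ∑ t ∈ A, (β t * σ t - η t + ε t)
        = ∑ t ∈ A, β t * σ t + ∑ p : Fin M, ((-∑ t ∈ S p \ C, η t) + ∑ t ∈ S p \ C, ε t) := by
      rw [hsumA (fun t => β t * σ t - η t + ε t), hsumA (fun t => β t * σ t)]
      rw [← Finset.sum_add_distrib]
      apply Finset.sum_congr rfl
      intro p _
      rw [← Finset.sum_neg_distrib, ← Finset.sum_add_distrib, ← Finset.sum_add_distrib]
      apply Finset.sum_congr rfl
      intro t _
      ring
    have h3 : ∑ p : Fin M, ((-∑ t ∈ S p \ C, η t) + ∑ t ∈ S p \ C, ε t)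
        ≤ ∑ p : Fin M, (2 * Real.sqrt (ξ * (S p).card) + ∑ t ∈ S p \ C, β t * σ t) := by
      apply Finset.sum_le_sum
      intro p _
      have := add_le_add (hη p) (hε p)
      linarith
    have h4 : ∑ p : Fin M, (2 * Real.sqrt (ξ * (S p).card) + ∑ t ∈ S p \ C, β t * σ t)
        = 2 * ∑ p : Fin M, Real.sqrt (ξ * (S p).card) + ∑ t ∈ A, β t * σ t := by
      rw [Finset.sum_add_distrib, ← Finset.mul_sum, hsumA (fun t => β t * σ t)]
    have h5 : 2 * ∑ p : Fin M, Real.sqrt (ξ * (S p).card) ≤ 2 * Real.sqrt (ξ * M * T) := by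
      linarith [hCS]
    linarith
  rw [hsplit]
  linarith
end
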